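/- Ping-pong variant: With the setup of the concatenation lemma (H = ⟨a,b⟩ acting on X, disjoint X₁, X₂, nonempty Kᵢ ⊆ Xᵢ, and the sets W_{X→K}, W_{K→X} of words in F₂), every relator of H (nonempty reduced word w̄ ∈ F₂ with w = 1 in H) whose first and last letters are identical has an exact subword belonging to 𝓕(W_{X→K}) \ W_{K→X}, where 𝓕(W_{X→K}) is the set of nonempty words none of whose exact subwords lies in W_{X→K}. -/

import Mathlib

open Pointwise

/-- A word in the free group `F₂` on two generators (`true` ↦ `ā`, `false` ↦ `b̄`),
presented as its list of syllables `(sᵢ, nᵢ)`, is reduced if consecutive syllables use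
distinct generators and all exponents are nonzero. -/
def IsReducedWord (w : List (Bool × ℤ)) : Prop :=
  w.Chain' (fun p q => p.1 ≠ q.1) ∧ ∀ p ∈ w, p.2 ≠ 0

/-- The evaluation of a word `w̄ ∈ F₂` in the group `H = ⟨a, b⟩`. -/
def evalW {H : Type*} [Group H] (a b : H) (w : List (Bool × ℤ)) : H :=
  (w.map fun s => (if s.1 then a else b) ^ s.2).prod

/-- Membership in `W(C₁, C₂, D₁, D₂)`: the reduced word `w̄` satisfies
`w(C₁) ⊆ D₂` if `w̄ ∈ F₂^{a,a}`, `w(C₂) ⊆ D₂` if `w̄ ∈ F₂^{a,b}`,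
`w(C₁) ⊆ D₁` if `w̄ ∈ F₂^{b,a}`, and `w(C₂) ⊆ D₁` if `w̄ ∈ F₂^{b,b}`
(the source is governed by the last letter of `w̄`, which acts first, and the
target by its first letter). -/
def memW {H X : Type*} [Group H] [MulAction H X] (a b : H) (C₁ C₂ D₁ D₂ : Set X)
    (w : List (Bool × ℤ)) : Prop :=
  IsReducedWord w ∧ ∃ h : w ≠ [],
    evalW a b w • (if (w.getLast h).1 then C₁ else C₂) ⊆ (if (w.head h).1 then D₂ else D₁)

/-- `𝓕(W)`: the set of nonempty words none of whose exact subwords (nonempty contiguous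
blocks of syllables) belongs to `W`. -/
def avoids (W : Set (List (Bool × ℤ))) : Set (List (Bool × ℤ)) :=
  {u | u ≠ [] ∧ ∀ v : List (Bool × ℤ), v ≠ [] → v <:+: u → v ∉ W}

/-! If no exact subword of `w` lay in `𝓕(W_{X→K}) \ W_{K→X}`, then by induction on the length
every exact subword `t` of `w` would lie in `W_{K→X}`: either `t ∈ 𝓕(W_{X→K})`, or `t = p v s`
with `v ∈ W_{X→K}`, and the concatenation lemma turns `p, s ∈ W_{K→X}` (shorter) and
`v ∈ W_{X→K}` into `t ∈ W_{K→X}`. For `t = w`, which acts trivially and has equal first and last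
letters, this gives `K₁ ⊆ X₂` or `K₂ ⊆ X₁`, impossible for nonempty `Kᵢ ⊆ Xᵢ` with disjoint `Xᵢ`. -/

section PingPong

variable {H X : Type*} [Group H] [MulAction H X] (a b : H)

lemma evalW_append (l₁ l₂ : List (Bool × ℤ)) :
    evalW a b (l₁ ++ l₂) = evalW a b l₁ * evalW a b l₂ := by
  simp [evalW]

def WordMaps (C₁ C₂ D₁ D₂ : Set X) (w : List (Bool × ℤ)) : Prop :=
  ∃ h : w ≠ [],
    evalW a b w • (if (w.getLast h).1 then C₁ else C₂) ⊆ (if (w.head h).1 then D₂ else D₁)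

variable {a b}

lemma memW.wordMaps {C₁ C₂ D₁ D₂ : Set X} {w : List (Bool × ℤ)}
    (h : memW a b C₁ C₂ D₁ D₂ w) : WordMaps a b C₁ C₂ D₁ D₂ w :=
  h.2

lemma WordMaps.mono {C₁ C₂ D₁ D₂ C₁' C₂' D₁' D₂' : Set X} {w : List (Bool × ℤ)}
    (hC₁ : C₁' ⊆ C₁) (hC₂ : C₂' ⊆ C₂) (hD₁ : D₁ ⊆ D₁') (hD₂ : D₂ ⊆ D₂')
    (h : WordMaps a b C₁ C₂ D₁ D₂ w) : WordMaps a b C₁' C₂' D₁' D₂' w := by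
  obtain ⟨hw, hsub⟩ := h
  refine ⟨hw, ?_⟩
  calc evalW a b w • (if (w.getLast hw).1 then C₁' else C₂')
      ⊆ evalW a b w • (if (w.getLast hw).1 then C₁ else C₂) := by
        gcongr; split_ifs <;> assumption
    _ ⊆ if (w.head hw).1 then D₂ else D₁ := hsub
    _ ⊆ if (w.head hw).1 then D₂' else D₁' := by split_ifs <;> assumption

/-- The concatenation lemma: `W(C, D) · W(E, C) ⊆ W(E, D)` for reduced products. -/
lemma WordMaps.append {C₁ C₂ D₁ D₂ E₁ E₂ : Set X} {p s : List (Bool × ℤ)}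
    (hchain : (p ++ s).IsChain (fun x y => x.1 ≠ y.1))
    (hp : WordMaps a b C₁ C₂ D₁ D₂ p) (hs : WordMaps a b E₁ E₂ C₁ C₂ s) :
    WordMaps a b E₁ E₂ D₁ D₂ (p ++ s) := by
  obtain ⟨hp0, hpsub⟩ := hp
  obtain ⟨hs0, hssub⟩ := hs
  have hps0 : p ++ s ≠ [] := by simp [hp0]
  have hjunction :
      (if (s.head hs0).1 then C₂ else C₁) = if (p.getLast hp0).1 then C₁ else C₂ := by
    have := hchain.rel_getLast_head_of_append hp0 hs0
    revert this; cases (p.getLast hp0).1 <;> cases (s.head hs0).1 <;> simp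
  refine ⟨hps0, ?_⟩
  rw [List.getLast_append_of_ne_nil hps0 hs0, List.head_append_of_ne_nil hp0, evalW_append,
    mul_smul]
  calc evalW a b p • evalW a b s • (if (s.getLast hs0).1 then E₁ else E₂)
      ⊆ evalW a b p • (if (p.getLast hp0).1 then C₁ else C₂) := by
        rw [← hjunction]; exact Set.smul_set_mono hssub
    _ ⊆ _ := hpsub

lemma wordMaps_of_forall_infix_mem_avoids {K₁ K₂ X₁ X₂ : Set X} (hK₁X : K₁ ⊆ X₁) (hK₂X : K₂ ⊆ X₂)
    {t : List (Bool × ℤ)} (ht : t ≠ []) (hchain : t.IsChain (fun x y => x.1 ≠ y.1))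
    (hF : ∀ u, u <:+: t → u ∈ avoids {v | memW a b X₁ X₂ K₁ K₂ v} →
      WordMaps a b K₁ K₂ X₁ X₂ u) :
    WordMaps a b K₁ K₂ X₁ X₂ t := by
  induction hn : t.length using Nat.strong_induction_on generalizing t with
  | _ n ih =>
  by_cases havoid : t ∈ avoids {v | memW a b X₁ X₂ K₁ K₂ v}
  · exact hF t List.infix_rfl havoid
  obtain ⟨v, hv0, ⟨p, s, rfl⟩, hv⟩ :
      ∃ v, v ≠ [] ∧ v <:+: t ∧ memW a b X₁ X₂ K₁ K₂ v := by
    simpa [avoids, ht] using havoid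
  have hlen : 0 < v.length := List.length_pos_iff.2 hv0
  have hshorter : ∀ r, r ≠ [] → r <:+: p ++ v ++ s → r.length < n →
      WordMaps a b K₁ K₂ X₁ X₂ r := fun r hr0 hr hrn =>
    ih _ hrn hr0 (hchain.infix hr) (fun u hu => hF u (hu.trans hr)) rfl
  have hvs : WordMaps a b K₁ K₂ K₁ K₂ (v ++ s) := by
    rcases eq_or_ne s [] with rfl | hs0
    · simpa using hv.wordMaps.mono hK₁X hK₂X subset_rfl subset_rfl
    · exact hv.wordMaps.append (hchain.infix ⟨p, [], by simp⟩)
        (hshorter s hs0 ⟨p ++ v, [], by simp⟩ (by simp at hn; omega))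
  rcases eq_or_ne p [] with rfl | hp0
  · simpa using hvs.mono subset_rfl subset_rfl hK₁X hK₂X
  · rw [List.append_assoc] at hchain ⊢
    exact (hshorter p hp0 ⟨[], v ++ s, by simp⟩ (by simp at hn; omega)).append hchain hvs

lemma not_wordMaps_of_evalW_eq_one {C₁ C₂ D₁ D₂ : Set X} (hdisj : Disjoint D₁ D₂)
    (hC₁ : C₁.Nonempty) (hC₂ : C₂.Nonempty) (hCD₁ : C₁ ⊆ D₁) (hCD₂ : C₂ ⊆ D₂)
    {w : List (Bool × ℤ)} (hw : w ≠ []) (hrel : evalW a b w = 1)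
    (hfl : (w.head hw).1 = (w.getLast hw).1) :
    ¬ WordMaps a b C₁ C₂ D₁ D₂ w := by
  rintro ⟨_, hsub⟩
  rw [hrel, one_smul, hfl] at hsub
  cases hlast : (w.getLast hw).1
  · obtain ⟨x, hx⟩ := hC₂
    simp only [hlast] at hsub
    exact Set.disjoint_left.1 hdisj (hsub hx) (hCD₂ hx)
  · obtain ⟨x, hx⟩ := hC₁
    simp only [hlast] at hsub
    exact Set.disjoint_left.1 hdisj (hCD₁ hx) (hsub hx)

end PingPong

/-- Ping-pong variant: let `H = ⟨a,b⟩` act on `X`, `X₁, X₂ ⊆ X` disjoint,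
`∅ ≠ Kᵢ ⊆ Xᵢ`. Then every relator of `H` whose first and last letters are identical has an
exact subword belonging to `𝓕(W_{X→K}) \ W_{K→X}`. -/
theorem stmt_14 {H X : Type*} [Group H] [MulAction H X] (a b : H)
    (X₁ X₂ K₁ K₂ : Set X) (hdisj : Disjoint X₁ X₂)
    (hK₁ : K₁.Nonempty) (hK₂ : K₂.Nonempty) (hK₁X : K₁ ⊆ X₁) (hK₂X : K₂ ⊆ X₂)
    (w : List (Bool × ℤ)) (hw : w ≠ []) (hred : IsReducedWord w)
    (hrel : evalW a b w = 1)
    (hfl : (w.head hw).1 = (w.getLast hw).1) :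
    ∃ u : List (Bool × ℤ), u ≠ [] ∧ u <:+: w ∧
      u ∈ avoids {v | memW a b X₁ X₂ K₁ K₂ v} ∧
      ¬ memW a b K₁ K₂ X₁ X₂ u := by
  by_contra! hcon
  have hmaps : WordMaps a b K₁ K₂ X₁ X₂ w :=
    wordMaps_of_forall_infix_mem_avoids hK₁X hK₂X hw hred.1 fun u hu hF =>
      (hcon u hF.1 hu hF).wordMaps
  exact not_wordMaps_of_evalW_eq_one hdisj hK₁ hK₂ hK₁X hK₂X hw hrel hfl hmaps
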